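/- Let S be an n-element subset of the rows of A whose rows are linearly independent, with v_S² := det(A_S A_Sᵀ), and let V > 0 satisfy v_S² ≤ V. Let P_S := A_Sᵀ (A_S A_Sᵀ)⁻¹ A_S be the orthogonal projector onto the row span of A_S, Q_S := A_Sᵀ · adj(A_S A_Sᵀ) · A_S, and set μ := 1 − √(1 − v_S²/V) (or μ := 1 + √(1 − v_S²/V)). Then for every e ∈ ℝ^N, the relaxed update satisfies ‖e − μ P_S e‖² = ‖e‖² − (1/V) · eᵀ Q_S e. -/

import Mathlib

open Matrix BigOperators Finset

/-- The submatrix of `A` formed by the rows indexed by the subset `S`. -/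
def subMat {M N : ℕ} (A : Matrix (Fin M) (Fin N) ℝ) (S : Finset (Fin M)) :
    Matrix {i // i ∈ S} (Fin N) ℝ :=
  A.submatrix (fun i => (i : Fin M)) id

/-- The squared volume `v_S² = det (A_S A_Sᵀ)` of the parallelepiped spanned by
the rows of `A` indexed by `S`. -/
noncomputable def volSq {M N : ℕ} (A : Matrix (Fin M) (Fin N) ℝ) (S : Finset (Fin M)) : ℝ :=
  (subMat A S * (subMat A S)ᵀ).det

/-- The quasi projector `Q_S = A_Sᵀ · adj(A_S A_Sᵀ) · A_S`. -/
noncomputable def quasiProj {M N : ℕ} (A : Matrix (Fin M) (Fin N) ℝ) (S : Finset (Fin M)) :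
    Matrix (Fin N) (Fin N) ℝ :=
  (subMat A S)ᵀ * (subMat A S * (subMat A S)ᵀ).adjugate * subMat A S

/-- The total quasi projector `Φ_n = Σ_{|S| = n} Q_S`. -/
noncomputable def totalQuasiProj {M N : ℕ} (A : Matrix (Fin M) (Fin N) ℝ) (n : ℕ) :
    Matrix (Fin N) (Fin N) ℝ :=
  ∑ S ∈ Finset.univ.powersetCard n, quasiProj A S

/-- The sum of squared `n`-volumes `vol_n = Σ_{|S| = n} v_S²` (with `vol_0 = 1`). -/
noncomputable def vol {M N : ℕ} (A : Matrix (Fin M) (Fin N) ℝ) (n : ℕ) : ℝ :=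
  ∑ S ∈ Finset.univ.powersetCard n, volSq A S

/-- Squared Euclidean norm of a vector in `ℝ^N`. -/
def normSq {N : ℕ} (x : Fin N → ℝ) : ℝ := ∑ i, x i ^ 2

/-- The rejection operator `R_S = I − Q_S / v_S²` when `v_S² ≠ 0`
(equal to `I − P_S` for linearly independent rows), and `R_S = I` otherwise. -/
noncomputable def rej {M N : ℕ} (A : Matrix (Fin M) (Fin N) ℝ) (S : Finset (Fin M)) :
    Matrix (Fin N) (Fin N) ℝ :=
  if volSq A S = 0 then 1 else 1 - (volSq A S)⁻¹ • quasiProj A S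

/-!
For linearly independent rows the Gram matrix `G = A_S A_Sᵀ` is positive definite, hence
invertible, so `adj G = v_S² G⁻¹` and `Q_S = v_S² P_S`. Since `P_S` is a symmetric idempotent,
`‖e − μ P_S e‖² = ‖e‖² − (2μ − μ²) eᵀ P_S e`, and the choice `μ = 1 ± √(1 − v_S²/V)` is exactly
the one making `2μ − μ² = v_S²/V`.
-/

namespace Matrix

variable {m n R : Type*} [Fintype m] [DecidableEq m] [Fintype n]

theorem isUnit_det_mul_transpose_of_linearIndependent [Field R] [PartialOrder R] [StarRing R]
    [StarOrderedRing R] [TrivialStar R] {B : Matrix m n R} (hB : LinearIndependent R B.row) :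
    IsUnit (B * Bᵀ).det := by
  rw [← isUnit_iff_isUnit_det, ← conjTranspose_eq_transpose_of_trivial]
  exact (PosDef.mul_conjTranspose_self B (vecMul_injective_iff.mpr hB)).isUnit

variable [CommRing R]

theorem adjugate_eq_det_smul_inv {G : Matrix m m R} (hG : IsUnit G.det) :
    G.adjugate = G.det • G⁻¹ := by
  rw [inv_def, smul_smul, Ring.mul_inverse_cancel _ hG, one_smul]

noncomputable def rowSpaceProj (B : Matrix m n R) : Matrix n n R :=
  Bᵀ * (B * Bᵀ)⁻¹ * B

theorem isSymm_rowSpaceProj (B : Matrix m n R) : (rowSpaceProj B).IsSymm := by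
  have hG : (B * Bᵀ)ᵀ = B * Bᵀ := by rw [transpose_mul, transpose_transpose]
  rw [IsSymm, rowSpaceProj, transpose_mul, transpose_mul, transpose_transpose,
    transpose_nonsing_inv, hG, Matrix.mul_assoc]

theorem isIdempotentElem_rowSpaceProj {B : Matrix m n R} (hB : IsUnit (B * Bᵀ).det) :
    IsIdempotentElem (rowSpaceProj B) := by
  rw [IsIdempotentElem, rowSpaceProj]
  simp only [Matrix.mul_assoc]
  rw [← Matrix.mul_assoc B Bᵀ, ← Matrix.mul_assoc (B * Bᵀ)⁻¹, nonsing_inv_mul _ hB,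
    Matrix.one_mul]

theorem dotProduct_mulVec_self_of_isSymm_of_isIdempotentElem {P : Matrix n n R} (hsymm : P.IsSymm)
    (hidem : IsIdempotentElem P) (e : n → R) :
    (P *ᵥ e) ⬝ᵥ (P *ᵥ e) = e ⬝ᵥ (P *ᵥ e) := by
  rw [dotProduct_mulVec, ← mulVec_transpose, hsymm.eq, mulVec_mulVec, hidem.eq, dotProduct_comm]

theorem dotProduct_self_sub_smul_mulVec {P : Matrix n n R} (hsymm : P.IsSymm)
    (hidem : IsIdempotentElem P) (μ : R) (e : n → R) :
    (e - μ • (P *ᵥ e)) ⬝ᵥ (e - μ • (P *ᵥ e)) = e ⬝ᵥ e - (2 * μ - μ ^ 2) * (e ⬝ᵥ (P *ᵥ e)) := by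
  simp only [dotProduct_sub, sub_dotProduct, smul_dotProduct, dotProduct_smul, smul_eq_mul,
    dotProduct_mulVec_self_of_isSymm_of_isIdempotentElem hsymm hidem, dotProduct_comm (P *ᵥ e) e]
  ring

end Matrix

open Matrix

theorem two_mul_sub_sq_eq_of_eq_one_sub_or_add_sqrt {t μ : ℝ} (ht : t ≤ 1)
    (hμ : μ = 1 - √(1 - t) ∨ μ = 1 + √(1 - t)) : 2 * μ - μ ^ 2 = t := by
  have hsq := Real.sq_sqrt (sub_nonneg.mpr ht)
  rcases hμ with rfl | rfl <;> linear_combination -hsq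

theorem normSq_eq_dotProduct_self {N : ℕ} (x : Fin N → ℝ) : normSq x = x ⬝ᵥ x := by
  simp only [normSq, dotProduct, sq]

theorem quasiProj_eq_volSq_smul_rowSpaceProj {M N : ℕ} {A : Matrix (Fin M) (Fin N) ℝ}
    {S : Finset (Fin M)} (hS : IsUnit (volSq A S)) :
    quasiProj A S = volSq A S • rowSpaceProj (subMat A S) := by
  rw [quasiProj, adjugate_eq_det_smul_inv hS, rowSpaceProj, Matrix.mul_smul, Matrix.smul_mul]
  rfl

theorem relaxed_update_identity_general {M N : ℕ} (A : Matrix (Fin M) (Fin N) ℝ)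
    (S : Finset (Fin M))
    (hind : LinearIndependent ℝ (fun i : {i // i ∈ S} => A (i : Fin M)))
    (V : ℝ) (hV : 0 < V) (hle : volSq A S ≤ V) (μ : ℝ)
    (hμ : μ = 1 - Real.sqrt (1 - volSq A S / V) ∨
          μ = 1 + Real.sqrt (1 - volSq A S / V))
    (e : Fin N → ℝ) :
    normSq (e - μ • (((subMat A S)ᵀ * (subMat A S * (subMat A S)ᵀ)⁻¹ * subMat A S) *ᵥ e)) =
      normSq e - (1 / V) * (e ⬝ᵥ (quasiProj A S *ᵥ e)) := by
  have hunit : IsUnit (volSq A S) := isUnit_det_mul_transpose_of_linearIndependent hind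
  have hcoef : 2 * μ - μ ^ 2 = volSq A S / V :=
    two_mul_sub_sq_eq_of_eq_one_sub_or_add_sqrt ((div_le_one hV).mpr hle) hμ
  change normSq (e - μ • (rowSpaceProj (subMat A S) *ᵥ e)) = _
  rw [normSq_eq_dotProduct_self, normSq_eq_dotProduct_self,
    dotProduct_self_sub_smul_mulVec (isSymm_rowSpaceProj _)
      (isIdempotentElem_rowSpaceProj hunit), hcoef,
    quasiProj_eq_volSq_smul_rowSpaceProj hunit, smul_mulVec, dotProduct_smul, smul_eq_mul]
  ring

/-- Relaxed update identity: for an `n`-element subset `S` with linearly independent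
rows, squared volume `v_S² ≤ V` (`V > 0`), orthogonal projector
`P_S = A_Sᵀ (A_S A_Sᵀ)⁻¹ A_S`, and relaxation `μ = 1 ± √(1 − v_S²/V)`, one has
`‖e − μ P_S e‖² = ‖e‖² − (1/V) eᵀ Q_S e`. -/
theorem relaxed_update_identity {M N n : ℕ} (A : Matrix (Fin M) (Fin N) ℝ)
    (S : Finset (Fin M)) (hS : S.card = n)
    (hind : LinearIndependent ℝ (fun i : {i // i ∈ S} => A (i : Fin M)))
    (V : ℝ) (hV : 0 < V) (hle : volSq A S ≤ V) (μ : ℝ)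
    (hμ : μ = 1 - Real.sqrt (1 - volSq A S / V) ∨
          μ = 1 + Real.sqrt (1 - volSq A S / V))
    (e : Fin N → ℝ) :
    normSq (e - μ • (((subMat A S)ᵀ * (subMat A S * (subMat A S)ᵀ)⁻¹ * subMat A S) *ᵥ e)) =
      normSq e - (1 / V) * (e ⬝ᵥ (quasiProj A S *ᵥ e)) :=
  relaxed_update_identity_general A S hind V hV hle μ hμ e
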